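/- arXiv:math/0505018 — 3 statements merged into one kernel-verified Lean document; each statement's English description precedes it below -/
import Mathlib

section
/- The integral ∫_{ℝ²} 1/(1 + ξ² + η² + ξ²(ξ²+η²)) dξ dη is finite. -/
open MeasureTheory

/-- The integral `∫_{ℝ²} 1/(1 + ξ² + η² + ξ²(ξ²+η²)) dξ dη` is finite. -/
theorem stmt1 :
    Integrable
      (fun p : ℝ × ℝ => 1 / (1 + p.1 ^ 2 + p.2 ^ 2 + p.1 ^ 2 * (p.1 ^ 2 + p.2 ^ 2)))
      volume := by
  have hg : Integrable (fun x : ℝ => 1 / (1 + x ^ 2)) volume :=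
    by simpa [one_div] using integrable_inv_one_add_sq
  have hprod : Integrable
      (fun p : ℝ × ℝ => (1 / (1 + p.1 ^ 2)) * (1 / (1 + p.2 ^ 2))) volume := by
    rw [Measure.volume_eq_prod]
    exact hg.mul_prod hg
  refine hprod.mono ?_ ?_
  · apply Measurable.aestronglyMeasurable
    apply Measurable.div measurable_const
    fun_prop
  · filter_upwards with p
    have hD : (0:ℝ) < 1 + p.1 ^ 2 + p.2 ^ 2 + p.1 ^ 2 * (p.1 ^ 2 + p.2 ^ 2) := by positivity
    have hP : (0:ℝ) < (1 + p.1 ^ 2) * (1 + p.2 ^ 2) := by positivity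
    rw [Real.norm_eq_abs, Real.norm_eq_abs, abs_of_pos (by positivity),
      abs_of_pos (by positivity)]
    rw [div_mul_div_comm, one_mul]
    apply one_div_le_one_div_of_le hP
    nlinarith [sq_nonneg p.1, sq_nonneg p.2, sq_nonneg (p.1^2)]
end

section
/- Let H be a Hilbert space and (u_n) a sequence in H converging weakly to u. Then there is a subsequence (u_{n_k}) such that the arithmetic means ũ_k = (u_{n_1} + ⋯ + u_{n_k})/k converge strongly to u in H. -/
/-!
For a weak limit `x`, the sequence `v n = u n - x` is weakly null and, by uniform boundedness,
bounded, say `‖v n‖ ≤ C`. Since `⟪y, v n⟫ → 0` for each fixed `y`, one can extract `φ` with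
`‖⟪v (φ i), v (φ j)⟫‖ ≤ 2⁻ⁱ` for `i < j`. Then each new term adds at most `C² + 4` to
`‖∑_{i<K} v (φ i)‖²`, so this squared norm is `O(K)` and the Cesàro means are `O(K^{-1/2})`.
-/

open Filter Finset Topology
open scoped InnerProductSpace

section Bounded

variable {𝕜 E : Type*} [RCLike 𝕜] [NormedAddCommGroup E] [NormedSpace 𝕜 E]

/-- Uniform boundedness on the dual, which is complete even when `E` is not, applied to the
images of `u n` in the bidual. -/
theorem exists_forall_norm_le_of_tendsto_dual {u : ℕ → E} {x : E}
    (hu : ∀ f : E →L[𝕜] 𝕜, Tendsto (fun n => f (u n)) atTop (𝓝 (f x))) :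
    ∃ C, ∀ n, ‖u n‖ ≤ C := by
  obtain ⟨C, hC⟩ := banach_steinhaus (g := fun n => NormedSpace.inclusionInDoubleDual 𝕜 E (u n))
    fun f => by simpa [bddAbove_def] using (hu f).norm.bddAbove_range
  exact ⟨C, fun n => ((NormedSpace.inclusionInDoubleDualLi 𝕜).norm_map (u n)).symm.trans_le (hC n)⟩

end Bounded

section InnerProductSpace

variable {𝕜 H : Type*} [RCLike 𝕜] [NormedAddCommGroup H] [InnerProductSpace 𝕜 H]

theorem norm_sum_range_sq_le {w : ℕ → H} {C : ℝ} (hC : ∀ n, ‖w n‖ ≤ C)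
    (hw : ∀ i j, i < j → ‖⟪w i, w j⟫_𝕜‖ ≤ (1 / 2) ^ i) (K : ℕ) :
    ‖∑ i ∈ range K, w i‖ ^ 2 ≤ K * (C ^ 2 + 4) := by
  induction K with
  | zero => simp
  | succ K ih =>
    have hcross : RCLike.re ⟪∑ i ∈ range K, w i, w K⟫_𝕜 ≤ 2 :=
      calc RCLike.re ⟪∑ i ∈ range K, w i, w K⟫_𝕜
          ≤ ‖⟪∑ i ∈ range K, w i, w K⟫_𝕜‖ := RCLike.re_le_norm _
        _ ≤ ∑ i ∈ range K, ‖⟪w i, w K⟫_𝕜‖ := by rw [sum_inner]; exact norm_sum_le _ _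
        _ ≤ ∑ i ∈ range K, (1 / 2 : ℝ) ^ i :=
            sum_le_sum fun i hi => hw i K (mem_range.1 hi)
        _ ≤ 2 := sum_geometric_two_le K
    have hlast : ‖w K‖ ^ 2 ≤ C ^ 2 := pow_le_pow_left₀ (norm_nonneg _) (hC K) 2
    rw [sum_range_succ, norm_add_sq (𝕜 := 𝕜)]
    push_cast
    linarith

theorem tendsto_cesaro_zero_of_almost_orthogonal {w : ℕ → H} {C : ℝ} (hC : ∀ n, ‖w n‖ ≤ C)
    (hw : ∀ i j, i < j → ‖⟪w i, w j⟫_𝕜‖ ≤ (1 / 2) ^ i) :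
    Tendsto (fun k : ℕ => ((k : 𝕜) + 1)⁻¹ • ∑ i ∈ range (k + 1), w i) atTop (𝓝 0) := by
  have hbound : ∀ k : ℕ, ‖((k : 𝕜) + 1)⁻¹ • ∑ i ∈ range (k + 1), w i‖
      ≤ √((C ^ 2 + 4) / ((k + 1 : ℕ) : ℝ)) := by
    intro k
    have hsum := norm_sum_range_sq_le hC hw (k + 1)
    rw [show (k : 𝕜) + 1 = ((k + 1 : ℕ) : 𝕜) by push_cast; ring, norm_smul, norm_inv,
      RCLike.norm_natCast]
    apply Real.le_sqrt_of_sq_le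
    rw [mul_pow, inv_pow, ← div_eq_inv_mul, div_le_div_iff₀ (by positivity) (by positivity)]
    nlinarith
  have hlim : Tendsto (fun k : ℕ => √((C ^ 2 + 4) / ((k + 1 : ℕ) : ℝ))) atTop (𝓝 0) := by
    simpa using ((tendsto_const_div_atTop_nhds_zero_nat (C ^ 2 + 4)).comp
      (tendsto_add_atTop_nat 1)).sqrt
  exact squeeze_zero_norm hbound hlim

theorem exists_strictMono_almost_orthogonal {v : ℕ → H}
    (hv : ∀ x, Tendsto (fun n => ⟪x, v n⟫_𝕜) atTop (𝓝 0)) :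
    ∃ φ : ℕ → ℕ, StrictMono φ ∧ ∀ i j, i < j → ‖⟪v (φ i), v (φ j)⟫_𝕜‖ ≤ (1 / 2) ^ i := by
  -- The bound `2⁻ᵖ` is attached to the value `p` rather than to its position in the sequence, so
  -- the relation only involves the two points; `i ≤ φ i` converts it at the end.
  obtain ⟨φ, -, hφ⟩ := exists_seq_of_forall_finset_exists (fun _ => True)
    (fun p q => p < q ∧ ‖⟪v p, v q⟫_𝕜‖ ≤ (1 / 2) ^ p) fun s _ => by
      have : ∀ᶠ q in atTop, ∀ p ∈ s, p < q ∧ ‖⟪v p, v q⟫_𝕜‖ ≤ (1 / 2) ^ p :=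
        (eventually_all_finset s).2 fun p _ => (eventually_gt_atTop p).and <|
          (hv (v p)).norm.eventually_le_const (by simp : ‖(0 : 𝕜)‖ < (1 / 2) ^ p)
      simpa using this.exists
  have hmono : StrictMono φ := fun m n h => (hφ m n h).1
  refine ⟨φ, hmono, fun i j h => (hφ i j h).2.trans ?_⟩
  exact pow_le_pow_of_le_one (by norm_num) (by norm_num) (hmono.id_le i)

theorem exists_strictMono_tendsto_cesaro_zero {v : ℕ → H}
    (hv : ∀ f : H →L[𝕜] 𝕜, Tendsto (fun n => f (v n)) atTop (𝓝 0)) :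
    ∃ φ : ℕ → ℕ, StrictMono φ ∧
      Tendsto (fun k : ℕ => ((k : 𝕜) + 1)⁻¹ • ∑ i ∈ range (k + 1), v (φ i)) atTop (𝓝 0) := by
  obtain ⟨C, hC⟩ :=
    exists_forall_norm_le_of_tendsto_dual (𝕜 := 𝕜) (u := v) (x := 0) (by simpa using hv)
  obtain ⟨φ, hφ, horth⟩ := exists_strictMono_almost_orthogonal fun x => hv (innerSL 𝕜 x)
  exact ⟨φ, hφ, tendsto_cesaro_zero_of_almost_orthogonal (fun n => hC (φ n)) horth⟩

theorem cesaro_sub_const_add (w : ℕ → H) (x : H) (k : ℕ) :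
    ((k : 𝕜) + 1)⁻¹ • ∑ i ∈ range (k + 1), (w i - x) + x
      = ((k : 𝕜) + 1)⁻¹ • ∑ i ∈ range (k + 1), w i := by
  have hk : (k : 𝕜) + 1 ≠ 0 := by exact_mod_cast k.succ_ne_zero
  rw [sum_sub_distrib, sum_const, card_range, ← Nat.cast_smul_eq_nsmul 𝕜, smul_sub, smul_smul]
  push_cast
  rw [inv_mul_cancel₀ hk, one_smul, sub_add_cancel]

theorem exists_strictMono_tendsto_cesaro {u : ℕ → H} {x : H}
    (hu : ∀ f : H →L[𝕜] 𝕜, Tendsto (fun n => f (u n)) atTop (𝓝 (f x))) :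
    ∃ φ : ℕ → ℕ, StrictMono φ ∧
      Tendsto (fun k : ℕ => ((k : 𝕜) + 1)⁻¹ • ∑ i ∈ range (k + 1), u (φ i)) atTop (𝓝 x) := by
  obtain ⟨φ, hφ, hlim⟩ := exists_strictMono_tendsto_cesaro_zero (𝕜 := 𝕜) (v := fun n => u n - x)
    fun f => by simpa only [map_sub, sub_self] using (hu f).sub_const (f x)
  refine ⟨φ, hφ, ?_⟩
  simpa only [zero_add, cesaro_sub_const_add] using hlim.add_const x

end InnerProductSpace

theorem stmt5_general {H : Type*} [NormedAddCommGroup H] [InnerProductSpace ℝ H]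
    (u : ℕ → H) (ulim : H)
    (hweak : ∀ f : H →L[ℝ] ℝ, Tendsto (fun n => f (u n)) atTop (nhds (f ulim))) :
    ∃ φ : ℕ → ℕ, StrictMono φ ∧
      Tendsto (fun k : ℕ => ((k : ℝ) + 1)⁻¹ • ∑ i ∈ Finset.range (k + 1), u (φ i))
        atTop (nhds ulim) :=
  exists_strictMono_tendsto_cesaro hweak

/-- Banach–Saks theorem in a Hilbert space: if `u_n ⇀ u` weakly, then some subsequence
has Cesàro means converging strongly to `u`. -/
theorem stmt5 {H : Type*} [NormedAddCommGroup H] [InnerProductSpace ℝ H] [CompleteSpace H]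
    (u : ℕ → H) (ulim : H)
    (hweak : ∀ f : H →L[ℝ] ℝ, Tendsto (fun n => f (u n)) atTop (nhds (f ulim))) :
    ∃ φ : ℕ → ℕ, StrictMono φ ∧
      Tendsto (fun k : ℕ => ((k : ℝ) + 1)⁻¹ • ∑ i ∈ Finset.range (k + 1), u (φ i))
        atTop (nhds ulim) :=
  stmt5_general u ulim hweak
end

section
/- Let w = (y+ε)·∫_y^1 h(x,τ)/(τ+ε) dτ with ‖h‖_{L²(D₁⁺)} ≤ M, where D₁⁺ = [−π,π] × [0,1]. Then the trace at y = 0 satisfies ‖w(·, 0)‖_{L²([−π,π])} ≤ M √ε, and hence ‖w(·,0)‖_{L²([−π,π])} → 0 as ε → 0. -/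
/-! By Cauchy–Schwarz in `τ` against the weight `(τ + ε)⁻¹`, whose squared `L²` norm on
`[0, 1]` is at most `1 / ε`, the trace satisfies `w(x, 0)² ≤ ε ∫₀¹ h(x, τ)² dτ`; integrating
in `x` (Fubini) gives `‖w(·, 0)‖² ≤ ε ‖h‖² ≤ ε M²`. -/

open MeasureTheory Real Filter Set

theorem sq_integral_mul_le_integral_sq_mul_integral_sq {α : Type*} [MeasurableSpace α]
    {μ : Measure α} {f g : α → ℝ} (hf : MemLp f 2 μ) (hg : MemLp g 2 μ) :
    (∫ a, f a * g a ∂μ) ^ 2 ≤ (∫ a, f a ^ 2 ∂μ) * ∫ a, g a ^ 2 ∂μ := by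
  have inner_toLp : ∀ {u v : α → ℝ} (hu : MemLp u 2 μ) (hv : MemLp v 2 μ),
      inner ℝ (hu.toLp u) (hv.toLp v) = ∫ a, u a * v a ∂μ := by
    intro u v hu hv
    rw [L2.inner_def]
    refine integral_congr_ae ?_
    filter_upwards [hu.coeFn_toLp, hv.coeFn_toLp] with a hua hva
    rw [hua, hva, RCLike.inner_apply, conj_trivial, mul_comm]
  simpa only [inner_toLp, ← sq] using real_inner_mul_inner_self_le (hf.toLp f) (hg.toLp g)

theorem integral_inv_add_sq_le {ε : ℝ} (hε : 0 < ε) :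
    ∫ τ in Icc (0:ℝ) 1, ((τ + ε)⁻¹) ^ 2 ≤ ε⁻¹ := by
  have hpos : ∀ τ ∈ uIcc (0:ℝ) 1, 0 < τ + ε := by
    intro τ hτ
    rw [uIcc_of_le zero_le_one] at hτ; linarith [hτ.1]
  have hderiv : ∀ τ ∈ uIcc (0:ℝ) 1,
      HasDerivAt (fun τ => -(τ + ε)⁻¹) (((τ + ε)⁻¹) ^ 2) τ := by
    intro τ hτ
    refine (((hasDerivAt_id' τ).add_const ε).fun_inv (hpos τ hτ).ne').fun_neg.congr_deriv ?_
    rw [inv_pow, neg_div, neg_neg, one_div]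
  rw [integral_Icc_eq_integral_Ioc, ← intervalIntegral.integral_of_le zero_le_one,
    intervalIntegral.integral_eq_sub_of_hasDerivAt hderiv]
  · have : 0 < (1 + ε)⁻¹ := by positivity
    simp only [zero_add]
    linarith
  · exact ((ContinuousOn.inv₀ (by fun_prop) fun τ hτ => (hpos τ hτ).ne').pow 2).intervalIntegrable

theorem sq_mul_integral_div_add_le {ε : ℝ} (hε : 0 < ε) {f : ℝ → ℝ}
    (hf : Integrable (fun τ => f τ ^ 2) (volume.restrict (Icc 0 1))) :
    (ε * ∫ τ in (0:ℝ)..1, f τ / (τ + ε)) ^ 2 ≤ ε * ∫ τ in Icc (0:ℝ) 1, f τ ^ 2 := by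
  rw [intervalIntegral.integral_of_le zero_le_one, ← integral_Icc_eq_integral_Ioc]
  have hpos : ∀ τ ∈ Icc (0:ℝ) 1, 0 < τ + ε := fun τ hτ => by linarith [hτ.1]
  have hnonneg : 0 ≤ ∫ τ in Icc (0:ℝ) 1, f τ ^ 2 := integral_nonneg fun τ => sq_nonneg _
  by_cases hI : IntegrableOn (fun τ => f τ / (τ + ε)) (Icc 0 1)
  · have hcont : ContinuousOn (fun τ : ℝ => (τ + ε)⁻¹) (Icc 0 1) :=
      ContinuousOn.inv₀ (by fun_prop) fun τ hτ => (hpos τ hτ).ne'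
    have hweight : MemLp (fun τ : ℝ => (τ + ε)⁻¹) 2 (volume.restrict (Icc 0 1)) :=
      (memLp_two_iff_integrable_sq (hcont.aestronglyMeasurable measurableSet_Icc)).2
        ((hcont.pow 2).integrableOn_compact isCompact_Icc)
    have hfmeas : AEStronglyMeasurable f (volume.restrict (Icc 0 1)) := by
      have hprod : AEStronglyMeasurable (fun τ => f τ / (τ + ε) * (τ + ε))
          (volume.restrict (Icc 0 1)) :=
        hI.aestronglyMeasurable.mul (continuous_add_const ε).aestronglyMeasurable
      refine hprod.congr ?_
      filter_upwards [ae_restrict_mem measurableSet_Icc] with τ hτ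
      field_simp [(hpos τ hτ).ne']
    have hCS := sq_integral_mul_le_integral_sq_mul_integral_sq
      ((memLp_two_iff_integrable_sq hfmeas).2 hf) hweight
    calc (ε * ∫ τ in Icc (0:ℝ) 1, f τ / (τ + ε)) ^ 2
        = ε ^ 2 * (∫ τ in Icc (0:ℝ) 1, f τ * (τ + ε)⁻¹) ^ 2 := by
          simp only [mul_pow, div_eq_mul_inv]
      _ ≤ ε ^ 2 * ((∫ τ in Icc (0:ℝ) 1, f τ ^ 2) * ε⁻¹) := by
          gcongr
          exact hCS.trans (mul_le_mul_of_nonneg_left (integral_inv_add_sq_le hε) hnonneg)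
      _ = ε * ∫ τ in Icc (0:ℝ) 1, f τ ^ 2 := by field_simp
  · rw [integral_undef hI, mul_zero, sq, mul_zero]
    positivity

theorem integral_sq_mul_integral_div_add_le {α : Type*} [MeasurableSpace α] {μ : Measure α}
    [SFinite μ] {ε : ℝ} (hε : 0 < ε) {g : α × ℝ → ℝ}
    (hg : Integrable (fun p => g p ^ 2) (μ.prod (volume.restrict (Icc 0 1)))) :
    ∫ x, (ε * ∫ τ in (0:ℝ)..1, g (x, τ) / (τ + ε)) ^ 2 ∂μ
      ≤ ε * ∫ p, g p ^ 2 ∂(μ.prod (volume.restrict (Icc 0 1))) := by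
  rw [integral_prod _ hg, ← integral_const_mul]
  refine integral_mono_of_nonneg (Eventually.of_forall fun x => sq_nonneg _)
    (hg.integral_prod_left.const_mul ε) ?_
  filter_upwards [hg.prod_right_ae] with x hx
  exact sq_mul_integral_div_add_le hε hx

/-- If `‖h_ε‖_{L²(D₁⁺)} ≤ M` uniformly, `D₁⁺ = [−π,π]×[0,1]`, then the trace at `y = 0`
of `w_ε(x,y) = (y+ε)∫_y^1 h_ε(x,τ)/(τ+ε) dτ` satisfies
`‖w_ε(·,0)‖_{L²([−π,π])} ≤ M√ε`, hence it tends to `0` as `ε → 0⁺`. -/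
theorem stmt17 (M : ℝ) (hM : 0 ≤ M) (h : ℝ → ℝ × ℝ → ℝ)
    (hmeas : ∀ ε > (0:ℝ), Integrable (fun p => (h ε p) ^ 2)
      (volume.restrict ((Set.Icc (-π) π) ×ˢ (Set.Icc (0:ℝ) 1))))
    (hbound : ∀ ε > (0:ℝ),
      (∫ p in (Set.Icc (-π) π) ×ˢ (Set.Icc (0:ℝ) 1), (h ε p) ^ 2) ≤ M ^ 2) :
    (∀ ε > (0:ℝ),
      Real.sqrt (∫ x in Set.Icc (-π) π,
          (ε * ∫ τ in (0:ℝ)..(1:ℝ), h ε (x, τ) / (τ + ε)) ^ 2)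
        ≤ M * Real.sqrt ε) ∧
    Tendsto (fun ε : ℝ =>
        Real.sqrt (∫ x in Set.Icc (-π) π,
          (ε * ∫ τ in (0:ℝ)..(1:ℝ), h ε (x, τ) / (τ + ε)) ^ 2))
      (nhdsWithin 0 (Set.Ioi 0)) (nhds 0) := by
  have hrect : volume.restrict (Icc (-π) π ×ˢ Icc (0:ℝ) 1)
      = (volume.restrict (Icc (-π) π)).prod (volume.restrict (Icc (0:ℝ) 1)) := by
    rw [Measure.volume_eq_prod, Measure.prod_restrict]
  have htrace : ∀ ε > (0:ℝ), Real.sqrt (∫ x in Icc (-π) π,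
      (ε * ∫ τ in (0:ℝ)..1, h ε (x, τ) / (τ + ε)) ^ 2) ≤ M * Real.sqrt ε := by
    intro ε hε
    rw [← sqrt_sq hM, ← sqrt_mul (sq_nonneg M)]
    refine sqrt_le_sqrt ?_
    calc _ ≤ ε * ∫ p in Icc (-π) π ×ˢ Icc (0:ℝ) 1, h ε p ^ 2 := by
          rw [hrect]; exact integral_sq_mul_integral_div_add_le hε (hrect ▸ hmeas ε hε)
      _ ≤ ε * M ^ 2 := by gcongr; exact hbound ε hε
      _ = M ^ 2 * ε := mul_comm _ _
  refine ⟨htrace, ?_⟩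
  have hsqrt : Tendsto (fun ε : ℝ => M * Real.sqrt ε) (nhdsWithin 0 (Ioi 0)) (nhds 0) := by
    simpa using ((continuous_sqrt.tendsto 0).const_mul M).mono_left nhdsWithin_le_nhds
  exact tendsto_of_tendsto_of_tendsto_of_le_of_le' tendsto_const_nhds hsqrt
    (Eventually.of_forall fun ε => sqrt_nonneg _)
    (eventually_nhdsWithin_of_forall htrace)
end
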